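/- arXiv:2506.09781 — 7 statements merged into one kernel-verified Lean document; each statement's English description precedes it below -/
import Mathlib

section
/- Let n ≥ 2 be a natural number and let u_1,…,u_n, v_1,…,v_n be vectors in ℝ^d with ‖u_i‖ = ‖v_i‖ = 1 for all i. Then (1/(n(n−1))) ∑_{i≠j} ⟨u_i, v_j⟩ ≥ ((n−2)/(2n(n−1))) ∑_{i=1}^n ⟨u_i, v_i⟩ − n/(2(n−1)). Moreover, equality holds if and only if there exists a vector c ∈ ℝ^d with u_i − v_i = c for all i, and ∑_{i=1}^n (u_i + v_i) = 0. -/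
open scoped RealInnerProductSpace
open Finset

lemma offDiag_sum_eq {n : ℕ} (f : Fin n × Fin n → ℝ) :
    ∑ p ∈ (univ : Finset (Fin n)).offDiag, f p
      = (∑ i, ∑ j, f (i, j)) - ∑ i, f (i, i) := by
  have hdiag : (univ : Finset (Fin n)).diag = univ.image (fun a => (a, a)) := by
    ext ⟨a, b⟩
    simp [Finset.mem_diag, eq_comm, Prod.ext_iff]
  have hsum : ∑ p ∈ (univ : Finset (Fin n)).diag, f p
      + ∑ p ∈ (univ : Finset (Fin n)).offDiag, f p
      = ∑ i, ∑ j, f (i, j) := by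
    rw [← Finset.sum_union (Finset.disjoint_diag_offDiag _), Finset.diag_union_offDiag,
      Finset.sum_product]
  have hd : ∑ p ∈ (univ : Finset (Fin n)).diag, f p = ∑ i, f (i, i) := by
    rw [hdiag, Finset.sum_image (by intro a _ b _ h; simpa [Prod.ext_iff] using h)]
  linarith

theorem stmt_0 {d n : ℕ} (hn : 2 ≤ n)
    (u v : Fin n → EuclideanSpace ℝ (Fin d))
    (hu : ∀ i, ‖u i‖ = 1) (hv : ∀ i, ‖v i‖ = 1) :
    ((n : ℝ) - 2) / (2 * n * (n - 1)) * ∑ i, ⟪u i, v i⟫ - (n : ℝ) / (2 * (n - 1))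
      ≤ (1 / ((n : ℝ) * (n - 1))) * ∑ p ∈ univ.offDiag, ⟪u p.1, v p.2⟫
    ∧ ((1 / ((n : ℝ) * (n - 1))) * ∑ p ∈ univ.offDiag, ⟪u p.1, v p.2⟫
        = ((n : ℝ) - 2) / (2 * n * (n - 1)) * ∑ i, ⟪u i, v i⟫ - (n : ℝ) / (2 * (n - 1))
      ↔ (∃ c : EuclideanSpace ℝ (Fin d), ∀ i, u i - v i = c)
        ∧ ∑ i, (u i + v i) = 0) := by
  have hn0 : 0 < n := lt_of_lt_of_le two_pos hn
  have hN2 : (2:ℝ) ≤ (n:ℝ) := by exact_mod_cast hn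
  have hNpos : (0:ℝ) < n := by linarith
  have hN1 : (0:ℝ) < (n:ℝ) - 1 := by linarith
  set N : ℝ := (n : ℝ) with hNdef
  set A : ℝ := ∑ p ∈ (univ : Finset (Fin n)).offDiag, ⟪u p.1, v p.2⟫ with hA
  set D : ℝ := ∑ i, ⟪u i, v i⟫ with hD
  set S : EuclideanSpace ℝ (Fin d) := ∑ i, (u i + v i) with hS
  set w : Fin n → EuclideanSpace ℝ (Fin d) := fun i => u i - v i with hw
  set P : ℝ := ∑ p ∈ (univ : Finset (Fin n)).offDiag, ‖w p.1 - w p.2‖^2 with hP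
  set T1 : ℝ := ∑ i, ∑ j, ⟪u i, u j⟫ with hT1
  set T2 : ℝ := ∑ i, ∑ j, ⟪v i, v j⟫ with hT2
  set M : ℝ := ∑ i, ∑ j, ⟪u i, v j⟫ with hM
  have hT : ∀ (a b : Fin n → EuclideanSpace ℝ (Fin d)),
      ⟪∑ i, a i, ∑ j, b j⟫ = ∑ i, ∑ j, ⟪a i, b j⟫ := by
    intro a b; rw [sum_inner]; exact Finset.sum_congr rfl fun i _ => inner_sum _ _ _
  have hvu : ∑ i, ∑ j, ⟪v i, u j⟫ = M := by
    rw [Finset.sum_comm, hM]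
    exact Finset.sum_congr rfl fun j _ => Finset.sum_congr rfl fun i _ => real_inner_comm _ _
  -- ‖S‖² expansion
  have hSsq : ‖S‖^2 = T1 + T2 + 2*M := by
    rw [← real_inner_self_eq_norm_sq, hS, hT]
    have : ∀ i j : Fin n, ⟪u i + v i, u j + v j⟫
        = ⟪u i, u j⟫ + ⟪u i, v j⟫ + ⟪v i, u j⟫ + ⟪v i, v j⟫ := by
      intro i j
      rw [inner_add_left, inner_add_right, inner_add_right]; ring
    calc ∑ i, ∑ j, ⟪u i + v i, u j + v j⟫
        = ∑ i, ∑ j, (⟪u i, u j⟫ + ⟪u i, v j⟫ + ⟪v i, u j⟫ + ⟪v i, v j⟫) := by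
          exact Finset.sum_congr rfl fun i _ => Finset.sum_congr rfl fun j _ => this i j
      _ = T1 + M + (∑ i, ∑ j, ⟪v i, u j⟫) + T2 := by
          simp [Finset.sum_add_distrib, hT1, hT2, hM]
      _ = T1 + T2 + 2*M := by rw [hvu]; ring
  -- w inner products
  have hww : ∑ i, ∑ j, ⟪w i, w j⟫ = T1 + T2 - 2*M := by
    have : ∀ i j : Fin n, ⟪w i, w j⟫
        = ⟪u i, u j⟫ - ⟪u i, v j⟫ - ⟪v i, u j⟫ + ⟪v i, v j⟫ := by
      intro i j
      show ⟪u i - v i, u j - v j⟫ = _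
      rw [inner_sub_left, inner_sub_right, inner_sub_right]; ring
    calc ∑ i, ∑ j, ⟪w i, w j⟫
        = ∑ i, ∑ j, (⟪u i, u j⟫ - ⟪u i, v j⟫ - ⟪v i, u j⟫ + ⟪v i, v j⟫) := by
          exact Finset.sum_congr rfl fun i _ => Finset.sum_congr rfl fun j _ => this i j
      _ = T1 - M - (∑ i, ∑ j, ⟪v i, u j⟫) + T2 := by
          simp [Finset.sum_add_distrib, Finset.sum_sub_distrib, hT1, hT2, hM]
      _ = T1 + T2 - 2*M := by rw [hvu]; ring
  have hW : ∑ i, ‖w i‖^2 = 2*N - 2*D := by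
    have : ∀ i : Fin n, ‖w i‖^2 = 2 - 2 * ⟪u i, v i⟫ := by
      intro i
      show ‖u i - v i‖^2 = _
      rw [norm_sub_sq_real, hu, hv]; ring
    rw [Finset.sum_congr rfl fun i _ => this i, Finset.sum_sub_distrib, ← Finset.mul_sum]
    simp [hD, hNdef]
    ring
  -- P expansion
  have hPid : P = 2*N*(2*N - 2*D) - 2*(T1 + T2 - 2*M) := by
    have h1 : P = ∑ p ∈ (univ : Finset (Fin n)).offDiag,
        (‖w p.1‖^2 + ‖w p.2‖^2 - 2 * ⟪w p.1, w p.2⟫) := by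
      rw [hP]
      exact Finset.sum_congr rfl fun p _ => by rw [norm_sub_sq_real]; ring
    rw [h1, offDiag_sum_eq]
    have hdiag0 : ∀ i : Fin n, ‖w i‖^2 + ‖w i‖^2 - 2 * ⟪w i, w i⟫ = 0 := by
      intro i; rw [real_inner_self_eq_norm_sq]; ring
    have hprod : ∑ i, ∑ j : Fin n, (‖w i‖^2 + ‖w j‖^2 - 2 * ⟪w i, w j⟫)
        = N * (∑ i, ‖w i‖^2) + N * (∑ i, ‖w i‖^2) - 2 * (∑ i, ∑ j, ⟪w i, w j⟫) := by
      simp [Finset.sum_add_distrib, Finset.sum_sub_distrib, Finset.mul_sum, Finset.sum_mul,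
        hNdef]
    rw [hprod, Finset.sum_congr rfl fun i _ => hdiag0 i, Finset.sum_const_zero, hww, hW]
    ring
  have hMAD : M = A + D := by
    have := offDiag_sum_eq (n := n) (fun p => ⟪u p.1, v p.2⟫)
    simp only at this
    rw [hM, hA, hD]
    linarith [this]
  have key : 2*‖S‖^2 + P = 8*A - 4*(N-2)*D + 4*N^2 := by
    rw [hSsq, hPid]; linear_combination 8*hMAD
  have hPnonneg : (0:ℝ) ≤ P := Finset.sum_nonneg fun p _ => sq_nonneg _
  have hSnonneg : (0:ℝ) ≤ ‖S‖^2 := sq_nonneg _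
  have hdiff : 1/(N*(N-1)) * A - ((N-2)/(2*N*(N-1)) * D - N/(2*(N-1)))
      = (8*A - 4*(N-2)*D + 4*N^2) / (8*N*(N-1)) := by
    field_simp
    ring
  have hdenpos : (0:ℝ) < 8*N*(N-1) := by positivity
  constructor
  · have hE : 0 ≤ 8*A - 4*(N-2)*D + 4*N^2 := by linarith
    have := div_nonneg hE (le_of_lt hdenpos)
    linarith [hdiff, this]
  · constructor
    · intro heq
      have h0 : (8*A - 4*(N-2)*D + 4*N^2) / (8*N*(N-1)) = 0 := by
        rw [← hdiff]; linarith
      have hE0 : 8*A - 4*(N-2)*D + 4*N^2 = 0 := by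
        rcases div_eq_zero_iff.mp h0 with h | h
        · exact h
        · exact absurd h (ne_of_gt hdenpos)
      have h2 : 2*‖S‖^2 + P = 0 := by rw [key]; exact hE0
      have hS0 : ‖S‖^2 = 0 := by linarith
      have hP0 : P = 0 := by linarith
      have hSzero : S = 0 := by
        have := pow_eq_zero_iff (n := 2) (by norm_num) |>.mp hS0
        exact norm_eq_zero.mp this
      have hterms := (Finset.sum_eq_zero_iff_of_nonneg
        (fun p _ => sq_nonneg (‖w p.1 - w p.2‖))).mp hP0
      refine ⟨⟨w ⟨0, hn0⟩, fun i => ?_⟩, hSzero⟩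
      by_cases hi : i = ⟨0, hn0⟩
      · rw [hi]
      · have hmem : (i, (⟨0, hn0⟩ : Fin n)) ∈ (univ : Finset (Fin n)).offDiag :=
          Finset.mem_offDiag.mpr ⟨Finset.mem_univ _, Finset.mem_univ _, hi⟩
        have := hterms _ hmem
        simp only at this
        have hz : ‖w i - w ⟨0, hn0⟩‖ = 0 := by
          have := pow_eq_zero_iff (n := 2) (by norm_num) |>.mp this
          exact this
        have : w i - w ⟨0, hn0⟩ = 0 := norm_eq_zero.mp hz
        have : w i = w ⟨0, hn0⟩ := sub_eq_zero.mp this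
        exact this
    · rintro ⟨⟨c, hc⟩, hsum⟩
      have hP0 : P = 0 := by
        rw [hP]
        apply Finset.sum_eq_zero
        intro p _
        have : w p.1 - w p.2 = 0 := by
          show (u p.1 - v p.1) - (u p.2 - v p.2) = 0
          rw [hc p.1, hc p.2, sub_self]
        rw [this]
        simp
      have hSe : S = 0 := hsum
      have hS0 : ‖S‖^2 = 0 := by
        rw [hSe]
        simp
      have hE0 : 8*A - 4*(N-2)*D + 4*N^2 = 0 := by
        rw [← key, hS0, hP0]; ring
      have : (8*A - 4*(N-2)*D + 4*N^2) / (8*N*(N-1)) = 0 := by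
        rw [hE0]; simp
      linarith [hdiff, this]
end

section
/- Let t > 0, let n ≥ 2, let s : {1,…,n} × {1,…,n} → ℝ, and fix distinct indices i ≠ j. For a natural number m with i, j ≤ m ≤ n, define g(m) := (1/(m·t)) · ( exp(s(i,j)/t) / ∑_{j'=1}^{m} exp(s(i,j')/t) + exp(s(i,j)/t) / ∑_{i'=1}^{m} exp(s(i',j)/t) ). Then for all m₁, m₂ with i, j ≤ m₁ ≤ m₂ ≤ n, one has 0 ≤ g(m₂) ≤ g(m₁), and g(m₂) = g(m₁) if and only if m₁ = m₂. -/
open Finset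

/-- The partial derivative of the symmetric InfoNCE loss on a batch of size `m`
(indices `1,…,m`) with respect to the negative-pair similarity `s i j`. -/
noncomputable def infoNCEGrad (t : ℝ) (s : ℕ → ℕ → ℝ) (i j m : ℕ) : ℝ :=
  (1 / ((m : ℝ) * t)) *
    (Real.exp (s i j / t) / ∑ j' ∈ Icc 1 m, Real.exp (s i j' / t)
      + Real.exp (s i j / t) / ∑ i' ∈ Icc 1 m, Real.exp (s i' j / t))

theorem stmt_9 (t : ℝ) (ht : 0 < t) (n : ℕ) (hn : 2 ≤ n)
    (s : ℕ → ℕ → ℝ) (i j : ℕ) (hi : 1 ≤ i) (hj : 1 ≤ j) (hij : i ≠ j)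
    (m₁ m₂ : ℕ) (him : i ≤ m₁) (hjm : j ≤ m₁) (h₁₂ : m₁ ≤ m₂) (h₂n : m₂ ≤ n) :
    0 ≤ infoNCEGrad t s i j m₂
    ∧ infoNCEGrad t s i j m₂ ≤ infoNCEGrad t s i j m₁
    ∧ (infoNCEGrad t s i j m₂ = infoNCEGrad t s i j m₁ ↔ m₁ = m₂) := by
  have hE : 0 < Real.exp (s i j / t) := Real.exp_pos _
  have h1m₁ : 1 ≤ m₁ := hi.trans him
  have hA : ∀ m : ℕ, 1 ≤ m → 0 < ∑ j' ∈ Icc 1 m, Real.exp (s i j' / t) := fun m hm =>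
    Finset.sum_pos (fun _ _ => Real.exp_pos _) ⟨1, by simp [hm]⟩
  have hB : ∀ m : ℕ, 1 ≤ m → 0 < ∑ i' ∈ Icc 1 m, Real.exp (s i' j / t) := fun m hm =>
    Finset.sum_pos (fun _ _ => Real.exp_pos _) ⟨1, by simp [hm]⟩
  have hnonneg : ∀ m : ℕ, 0 ≤ infoNCEGrad t s i j m := by
    intro m
    unfold infoNCEGrad
    have h1 : (0:ℝ) ≤ ∑ j' ∈ Icc 1 m, Real.exp (s i j' / t) :=
      Finset.sum_nonneg fun _ _ => (Real.exp_pos _).le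
    have h2 : (0:ℝ) ≤ ∑ i' ∈ Icc 1 m, Real.exp (s i' j / t) :=
      Finset.sum_nonneg fun _ _ => (Real.exp_pos _).le
    positivity
  have hmono : ∀ a b : ℕ, 1 ≤ a → a < b →
      infoNCEGrad t s i j b < infoNCEGrad t s i j a := by
    intro a b ha hab
    have hAa := hA a ha
    have hBa := hB a ha
    have hAb := hA b (ha.trans hab.le)
    have hBb := hB b (ha.trans hab.le)
    have hAsub : ∑ j' ∈ Icc 1 a, Real.exp (s i j' / t)
        ≤ ∑ j' ∈ Icc 1 b, Real.exp (s i j' / t) :=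
      Finset.sum_le_sum_of_subset_of_nonneg (Finset.Icc_subset_Icc_right hab.le)
        (fun _ _ _ => (Real.exp_pos _).le)
    have hBsub : ∑ i' ∈ Icc 1 a, Real.exp (s i' j / t)
        ≤ ∑ i' ∈ Icc 1 b, Real.exp (s i' j / t) :=
      Finset.sum_le_sum_of_subset_of_nonneg (Finset.Icc_subset_Icc_right hab.le)
        (fun _ _ _ => (Real.exp_pos _).le)
    have ha' : (0:ℝ) < a := by exact_mod_cast Nat.lt_of_lt_of_le Nat.zero_lt_one ha
    have hb' : (0:ℝ) < b := by exact_mod_cast Nat.lt_of_lt_of_le Nat.zero_lt_one (ha.trans hab.le)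
    have hat : (0:ℝ) < (a : ℝ) * t := mul_pos ha' ht
    have hbt : (0:ℝ) < (b : ℝ) * t := mul_pos hb' ht
    have habt : (a : ℝ) * t < (b : ℝ) * t := by
      have : (a : ℝ) < b := by exact_mod_cast hab
      nlinarith
    have hdiv : 1 / ((b : ℝ) * t) < 1 / ((a : ℝ) * t) :=
      one_div_lt_one_div_of_lt hat habt
    unfold infoNCEGrad
    have hP1 : Real.exp (s i j / t) / (∑ j' ∈ Icc 1 b, Real.exp (s i j' / t))
        ≤ Real.exp (s i j / t) / (∑ j' ∈ Icc 1 a, Real.exp (s i j' / t)) := by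
      gcongr
    have hP2 : Real.exp (s i j / t) / (∑ i' ∈ Icc 1 b, Real.exp (s i' j / t))
        ≤ Real.exp (s i j / t) / (∑ i' ∈ Icc 1 a, Real.exp (s i' j / t)) := by
      gcongr
    have hPa : 0 < Real.exp (s i j / t) / (∑ j' ∈ Icc 1 a, Real.exp (s i j' / t))
        + Real.exp (s i j / t) / (∑ i' ∈ Icc 1 a, Real.exp (s i' j / t)) := by
      positivity
    calc 1 / ((b : ℝ) * t) *
          (Real.exp (s i j / t) / (∑ j' ∈ Icc 1 b, Real.exp (s i j' / t))
            + Real.exp (s i j / t) / (∑ i' ∈ Icc 1 b, Real.exp (s i' j / t)))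
        ≤ 1 / ((b : ℝ) * t) *
          (Real.exp (s i j / t) / (∑ j' ∈ Icc 1 a, Real.exp (s i j' / t))
            + Real.exp (s i j / t) / (∑ i' ∈ Icc 1 a, Real.exp (s i' j / t))) := by
          apply mul_le_mul_of_nonneg_left (by linarith) (by positivity)
      _ < 1 / ((a : ℝ) * t) *
          (Real.exp (s i j / t) / (∑ j' ∈ Icc 1 a, Real.exp (s i j' / t))
            + Real.exp (s i j / t) / (∑ i' ∈ Icc 1 a, Real.exp (s i' j / t))) :=
          mul_lt_mul_of_pos_right hdiv hPa
  refine ⟨hnonneg m₂, ?_, ?_⟩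
  · rcases eq_or_lt_of_le h₁₂ with h | h
    · rw [h]
    · exact (hmono m₁ m₂ h1m₁ h).le
  · constructor
    · intro heq
      by_contra hne
      have h : m₁ < m₂ := lt_of_le_of_ne h₁₂ hne
      exact absurd heq (ne_of_lt (hmono m₁ m₂ h1m₁ h))
    · intro h; rw [h]
end

section
/- Let n ≥ 2, let φ, ψ : ℝ → ℝ be convex and monotone nondecreasing functions, and let u_1,…,u_n, v_1,…,v_n be vectors in ℝ^d with ‖u_i‖ = ‖v_i‖ = 1 for all i. Define E_pos := (1/n) ∑_{i=1}^n ⟨u_i, v_i⟩ and E_neg := (1/(n(n−1))) ∑_{i≠j} ⟨u_i, v_j⟩. Then (1/(2n)) ∑_{i=1}^n [ ψ( ∑_{j≠i} φ(⟨u_i, v_j⟩ − ⟨u_i, v_i⟩) ) + ψ( ∑_{j≠i} φ(⟨u_j, v_i⟩ − ⟨u_i, v_i⟩) ) ] ≥ ψ( (n−1) · φ( E_neg − E_pos ) ). -/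
open scoped RealInnerProductSpace
open Finset

/-!
Write `a i j = ⟪u i, v j⟫`. Both families `a i j - a i i` and `a j i - a i i`, indexed by the
`n (n - 1)` off-diagonal pairs, have mean `E_neg - E_pos`. Jensen's inequality for `φ` over the
off-diagonal pairs bounds `(n - 1) φ (E_neg - E_pos)` by the mean over `i` of either inner sum,
and then monotonicity of `ψ` and Jensen's inequality for `ψ` over all `2 n` inner sums finish.
-/

section Jensen

variable {ι : Type*} {f : ℝ → ℝ}

theorem ConvexOn.map_sum_div_card_le (hf : ConvexOn ℝ Set.univ f) {s : Finset ι}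
    (hs : s.Nonempty) (x : ι → ℝ) :
    f ((∑ i ∈ s, x i) / #s) ≤ (∑ i ∈ s, f (x i)) / #s := by
  have hcard : (0 : ℝ) < #s := by exact_mod_cast hs.card_pos
  have hJ := hf.map_sum_le (t := s) (w := fun _ => (#s : ℝ)⁻¹) (p := x)
    (fun _ _ => by positivity) (by simp [hcard.ne']) (fun _ _ => Set.mem_univ _)
  rwa [← smul_sum, ← smul_sum, smul_eq_mul, smul_eq_mul, inv_mul_eq_div, inv_mul_eq_div] at hJ

theorem ConvexOn.map_sum_add_sum_div_le (hf : ConvexOn ℝ Set.univ f) {s : Finset ι}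
    (hs : s.Nonempty) (x y : ι → ℝ) :
    f ((∑ i ∈ s, x i + ∑ i ∈ s, y i) / (2 * #s))
      ≤ (∑ i ∈ s, (f (x i) + f (y i))) / (2 * #s) := by
  have h := hf.map_sum_div_card_le (s := s.disjSum s) (by simpa [← card_pos] using hs)
    (Sum.elim x y)
  simp only [sum_disjSum, Sum.elim_inl, Sum.elim_inr, card_disjSum, ← two_mul, Nat.cast_mul,
    Nat.cast_two] at h
  simpa only [sum_add_distrib] using h

end Jensen

section OffDiag

variable {α : Type*}

theorem Finset.natCast_card_offDiag (s : Finset α) :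
    ((#s.offDiag : ℕ) : ℝ) = #s * (#s - 1) := by
  rw [offDiag_card, Nat.cast_sub (Nat.le_mul_self _)]
  push_cast
  ring

theorem Finset.offDiag_nonempty_of_one_lt_card {s : Finset α} (hs : 1 < #s) :
    s.offDiag.Nonempty := by
  obtain ⟨a, ha, b, hb, hab⟩ := one_lt_card.1 hs
  exact ⟨(a, b), mem_offDiag.2 ⟨ha, hb, hab⟩⟩

theorem Finset.sum_offDiag_swap {M : Type*} [AddCommMonoid M] (s : Finset α)
    (F : α × α → M) :
    ∑ p ∈ s.offDiag, F p.swap = ∑ p ∈ s.offDiag, F p :=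
  have hswap : ∀ p ∈ s.offDiag, p.swap ∈ s.offDiag := fun p hp => by
    rw [mem_offDiag] at hp ⊢
    exact ⟨hp.2.1, hp.1, hp.2.2.symm⟩
  sum_nbij' Prod.swap Prod.swap hswap hswap (by simp) (by simp) (fun _ _ => rfl)

variable [DecidableEq α]

theorem Finset.sum_offDiag_eq_sum_sum_erase {M : Type*} [AddCommMonoid M] (s : Finset α)
    (F : α × α → M) :
    ∑ p ∈ s.offDiag, F p = ∑ i ∈ s, ∑ j ∈ s.erase i, F (i, j) :=
  sum_finset_product _ _ _ fun p => by simp only [mem_offDiag, mem_erase]; tauto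

theorem Finset.sum_offDiag_sub_diag (s : Finset α) (a : α → α → ℝ) :
    ∑ p ∈ s.offDiag, (a p.1 p.2 - a p.1 p.1)
      = ∑ p ∈ s.offDiag, a p.1 p.2 - (#s - 1) * ∑ i ∈ s, a i i := by
  rw [sum_sub_distrib, s.sum_offDiag_eq_sum_sum_erase (fun p => a p.1 p.1), mul_sum]
  congr 1
  refine sum_congr rfl fun i hi => ?_
  dsimp only
  rw [sum_const, card_erase_of_mem hi, nsmul_eq_mul,
    Nat.cast_sub (card_pos.mpr ⟨i, hi⟩), Nat.cast_one]

theorem Finset.sum_offDiag_swap_sub_diag (s : Finset α) (a : α → α → ℝ) :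
    ∑ p ∈ s.offDiag, (a p.2 p.1 - a p.1 p.1)
      = ∑ p ∈ s.offDiag, a p.1 p.2 - (#s - 1) * ∑ i ∈ s, a i i := by
  rw [sum_sub_distrib, ← s.sum_offDiag_swap fun p => a p.2 p.1, ← sum_sub_distrib]
  exact sum_offDiag_sub_diag s a

theorem ConvexOn.mul_map_sum_offDiag_div_le {f : ℝ → ℝ} (hf : ConvexOn ℝ Set.univ f)
    {s : Finset α} (hs : 1 < #s) (g : α × α → ℝ) :
    (#s - 1) * f ((∑ p ∈ s.offDiag, g p) / (#s * (#s - 1)))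
      ≤ (∑ i ∈ s, ∑ j ∈ s.erase i, f (g (i, j))) / #s := by
  have hs' : (1 : ℝ) < #s := by exact_mod_cast hs
  have hJ := hf.map_sum_div_card_le (offDiag_nonempty_of_one_lt_card hs) g
  rw [natCast_card_offDiag] at hJ
  calc (#s - 1) * f ((∑ p ∈ s.offDiag, g p) / (#s * (#s - 1)))
      ≤ (#s - 1) * ((∑ p ∈ s.offDiag, f (g p)) / (#s * (#s - 1))) :=
        mul_le_mul_of_nonneg_left hJ (by linarith)
    _ = (∑ i ∈ s, ∑ j ∈ s.erase i, f (g (i, j))) / #s := by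
        rw [sum_offDiag_eq_sum_sum_erase]
        field_simp [(by linarith : (#s : ℝ) - 1 ≠ 0)]

end OffDiag

theorem stmt_10_general {d n : ℕ} (hn : 2 ≤ n)
    (φ ψ : ℝ → ℝ) (hφc : ConvexOn ℝ Set.univ φ)
    (hψc : ConvexOn ℝ Set.univ ψ) (hψm : Monotone ψ)
    (u v : Fin n → EuclideanSpace ℝ (Fin d)) :
    ψ (((n : ℝ) - 1) *
        φ ((1 / ((n : ℝ) * (n - 1))) * ∑ p ∈ univ.offDiag, ⟪u p.1, v p.2⟫
            - (1 / (n : ℝ)) * ∑ i, ⟪u i, v i⟫))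
      ≤ (1 / (2 * (n : ℝ))) *
          ∑ i, (ψ (∑ j ∈ univ.erase i, φ (⟪u i, v j⟫ - ⟪u i, v i⟫))
                + ψ (∑ j ∈ univ.erase i, φ (⟪u j, v i⟫ - ⟪u i, v i⟫))) := by
  set a : Fin n → Fin n → ℝ := fun i j => ⟪u i, v j⟫
  have hcard : 1 < #(univ : Finset (Fin n)) := by rwa [card_univ, Fintype.card_fin]
  have hn' : (1 : ℝ) < n := by exact_mod_cast hn
  have hmean : (1 / ((n : ℝ) * (n - 1))) * ∑ p ∈ univ.offDiag, a p.1 p.2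
      - (1 / (n : ℝ)) * ∑ i, a i i
      = (∑ p ∈ univ.offDiag, (a p.1 p.2 - a p.1 p.1)) / (n * (n - 1)) := by
    rw [sum_offDiag_sub_diag, card_univ, Fintype.card_fin]
    field_simp [(by linarith : (n : ℝ) - 1 ≠ 0)]
  have hA := hφc.mul_map_sum_offDiag_div_le hcard fun p => a p.1 p.2 - a p.1 p.1
  have hB := hφc.mul_map_sum_offDiag_div_le hcard fun p => a p.2 p.1 - a p.1 p.1
  rw [sum_offDiag_swap_sub_diag, ← sum_offDiag_sub_diag] at hB
  simp only [card_univ, Fintype.card_fin] at hA hB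
  rw [← hmean] at hA hB
  calc _ ≤ ψ ((∑ i, ∑ j ∈ univ.erase i, φ (a i j - a i i)
          + ∑ i, ∑ j ∈ univ.erase i, φ (a j i - a i i)) / (2 * n)) := by
        have hsplit : ∀ x y : ℝ, (x + y) / (2 * n) = (x / n + y / n) / 2 := fun _ _ => by ring
        refine hψm ?_
        rw [hsplit]
        linarith
    _ ≤ _ := by
        simpa only [card_univ, Fintype.card_fin, one_div_mul_eq_div] using
          hψc.map_sum_add_sum_div_le (card_pos.1 (zero_lt_one.trans hcard)) _ _

theorem stmt_10 {d n : ℕ} (hn : 2 ≤ n)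
    (φ ψ : ℝ → ℝ) (hφc : ConvexOn ℝ Set.univ φ) (hφm : Monotone φ)
    (hψc : ConvexOn ℝ Set.univ ψ) (hψm : Monotone ψ)
    (u v : Fin n → EuclideanSpace ℝ (Fin d))
    (hu : ∀ i, ‖u i‖ = 1) (hv : ∀ i, ‖v i‖ = 1) :
    ψ (((n : ℝ) - 1) *
        φ ((1 / ((n : ℝ) * (n - 1))) * ∑ p ∈ univ.offDiag, ⟪u p.1, v p.2⟫
            - (1 / (n : ℝ)) * ∑ i, ⟪u i, v i⟫))
      ≤ (1 / (2 * (n : ℝ))) *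
          ∑ i, (ψ (∑ j ∈ univ.erase i, φ (⟪u i, v j⟫ - ⟪u i, v i⟫))
                + ψ (∑ j ∈ univ.erase i, φ (⟪u j, v i⟫ - ⟪u i, v i⟫))) :=
  stmt_10_general hn φ ψ hφc hψc hψm u v
end

section
/- Let n ≥ 2, let φ : ℝ → ℝ be concave and monotone nondecreasing, let ψ : ℝ → ℝ be convex and monotone nondecreasing, and let u_1,…,u_n, v_1,…,v_n be vectors in ℝ^d with ‖u_i‖ = ‖v_i‖ = 1 for all i. Let p̄ := (1/n) ∑_{i=1}^n ⟨u_i, v_i⟩. Then −(1/n) ∑_{i=1}^n φ(⟨u_i, v_i⟩) + (1/(n(n−1))) ∑_{i≠j} ψ(⟨u_i, v_j⟩) ≥ −φ(p̄) + ψ( ((n−2)/(2(n−1)))·p̄ − n/(2(n−1)) ). -/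
/-!
Jensen's inequality bounds `-(1/n) ∑ φ(⟪uᵢ, vᵢ⟫)` below by `-φ(p̄)` and the off-diagonal term
below by `ψ` of the mean off-diagonal correlation. Since `∑_{i≠j} ⟪uᵢ, vⱼ⟫ = ⟪∑ uᵢ, ∑ vⱼ⟫ - n p̄` and
`⟪x, y⟫ ≥ -‖x - y‖² / 4`, with `‖∑ (uᵢ - vᵢ)‖² ≤ n ∑ ‖uᵢ - vᵢ‖² = 2n² (1 - p̄)` for unit vectors,
that mean is at least `(n - 2) p̄ / (2(n - 1)) - n / (2(n - 1))`, and `ψ` is monotone.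
-/

open scoped RealInnerProductSpace
open Finset

theorem ConvexOn.map_finset_average_le {ι : Type*} {s : Finset ι} (hs : s.Nonempty) {D : Set ℝ}
    {f : ℝ → ℝ} (hf : ConvexOn ℝ D f) {p : ι → ℝ} (hp : ∀ i ∈ s, p i ∈ D) :
    f ((1 / (#s : ℝ)) * ∑ i ∈ s, p i) ≤ (1 / (#s : ℝ)) * ∑ i ∈ s, f (p i) := by
  have hcard : (#s : ℝ) ≠ 0 := by exact_mod_cast hs.card_pos.ne'
  simpa only [smul_eq_mul, ← mul_sum] using
    hf.map_sum_le (w := fun _ => 1 / (#s : ℝ)) (fun _ _ => by positivity)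
      (by rw [sum_const, nsmul_eq_mul]; field_simp) hp

theorem ConcaveOn.le_map_finset_average {ι : Type*} {s : Finset ι} (hs : s.Nonempty) {D : Set ℝ}
    {f : ℝ → ℝ} (hf : ConcaveOn ℝ D f) {p : ι → ℝ} (hp : ∀ i ∈ s, p i ∈ D) :
    (1 / (#s : ℝ)) * ∑ i ∈ s, f (p i) ≤ f ((1 / (#s : ℝ)) * ∑ i ∈ s, p i) := by
  have := hf.neg.map_finset_average_le hs hp
  simp only [Pi.neg_apply, sum_neg_distrib, mul_neg] at this
  linarith

theorem Finset.card_univ_offDiag_cast (ι : Type*) [Fintype ι] [DecidableEq ι] :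
    (#(univ : Finset ι).offDiag : ℝ) = Fintype.card ι * (Fintype.card ι - 1) := by
  rw [offDiag_card, card_univ, Nat.cast_sub (Nat.le_mul_self _), Nat.cast_mul]
  ring

section InnerProduct

variable {E : Type*} [NormedAddCommGroup E] {ι : Type*} [Fintype ι]

theorem norm_sum_sq_le_card_mul_sum_norm_sq (w : ι → E) :
    ‖∑ i, w i‖ ^ 2 ≤ Fintype.card ι * ∑ i, ‖w i‖ ^ 2 := by
  calc ‖∑ i, w i‖ ^ 2 ≤ (∑ i, ‖w i‖) ^ 2 := by gcongr; exact norm_sum_le _ _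
    _ ≤ Fintype.card ι * ∑ i, ‖w i‖ ^ 2 := by
      simpa using sq_sum_le_card_mul_sum_sq (s := univ) (f := fun i => ‖w i‖)

variable [InnerProductSpace ℝ E]

theorem neg_norm_sub_sq_div_four_le_real_inner (x y : E) : -(‖x - y‖ ^ 2 / 4) ≤ ⟪x, y⟫ := by
  linarith [norm_add_sq_real x y, norm_sub_sq_real x y, sq_nonneg ‖x + y‖]

theorem norm_sub_sq_eq_two_sub_inner {x y : E} (hx : ‖x‖ = 1) (hy : ‖y‖ = 1) :
    ‖x - y‖ ^ 2 = 2 - 2 * ⟪x, y⟫ := by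
  rw [norm_sub_sq_real, hx, hy]
  ring

variable [DecidableEq ι]

theorem sum_offDiag_inner_eq (u v : ι → E) :
    ∑ p ∈ univ.offDiag, ⟪u p.1, v p.2⟫ = ⟪∑ i, u i, ∑ i, v i⟫ - ∑ i, ⟪u i, v i⟫ := by
  have hsplit : ∑ p ∈ (univ : Finset ι) ×ˢ univ, ⟪u p.1, v p.2⟫
      = ∑ p ∈ (univ : Finset ι).diag, ⟪u p.1, v p.2⟫ + ∑ p ∈ univ.offDiag, ⟪u p.1, v p.2⟫ := by
    rw [← sum_union (disjoint_diag_offDiag _), diag_union_offDiag]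
  rw [sum_product, sum_diag] at hsplit
  rw [sum_inner]
  simp only [inner_sum] at hsplit ⊢
  linarith

theorem sum_offDiag_inner_ge_of_norm_eq_one (u v : ι → E) (hu : ∀ i, ‖u i‖ = 1)
    (hv : ∀ i, ‖v i‖ = 1) :
    (Fintype.card ι - 2) * (∑ i, ⟪u i, v i⟫) / 2 - (Fintype.card ι : ℝ) ^ 2 / 2
      ≤ ∑ p ∈ univ.offDiag, ⟪u p.1, v p.2⟫ := by
  have hdiff : ‖∑ i, u i - ∑ i, v i‖ ^ 2
      ≤ Fintype.card ι * (2 * Fintype.card ι - 2 * ∑ i, ⟪u i, v i⟫) := by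
    rw [← sum_sub_distrib]
    refine (norm_sum_sq_le_card_mul_sum_norm_sq _).trans_eq ?_
    simp only [norm_sub_sq_eq_two_sub_inner (hu _) (hv _), sum_sub_distrib, ← mul_sum,
      sum_const, card_univ, nsmul_eq_mul]
    ring
  rw [sum_offDiag_inner_eq]
  linarith [neg_norm_sub_sq_div_four_le_real_inner (∑ i, u i) (∑ i, v i)]

end InnerProduct

theorem stmt_12_general {d n : ℕ} (hn : 2 ≤ n)
    (φ ψ : ℝ → ℝ) (hφc : ConcaveOn ℝ Set.univ φ)
    (hψc : ConvexOn ℝ Set.univ ψ) (hψm : Monotone ψ)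
    (u v : Fin n → EuclideanSpace ℝ (Fin d))
    (hu : ∀ i, ‖u i‖ = 1) (hv : ∀ i, ‖v i‖ = 1) :
    -φ ((1 / (n : ℝ)) * ∑ i, ⟪u i, v i⟫)
      + ψ ((((n : ℝ) - 2) / (2 * ((n : ℝ) - 1))) * ((1 / (n : ℝ)) * ∑ i, ⟪u i, v i⟫)
            - (n : ℝ) / (2 * ((n : ℝ) - 1)))
      ≤ -(1 / (n : ℝ)) * ∑ i, φ ⟪u i, v i⟫
        + (1 / ((n : ℝ) * (n - 1))) * ∑ p ∈ univ.offDiag, ψ ⟪u p.1, v p.2⟫ := by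
  have hn' : (2 : ℝ) ≤ n := by exact_mod_cast hn
  have hoffDiag : (univ : Finset (Fin n)).offDiag.Nonempty :=
    ⟨(⟨0, by omega⟩, ⟨1, by omega⟩), by simp⟩
  have hφ := hφc.le_map_finset_average (univ_nonempty_iff.mpr ⟨⟨0, by omega⟩⟩)
    (p := fun i => ⟪u i, v i⟫) fun _ _ => trivial
  have hψ := hψc.map_finset_average_le hoffDiag (p := fun p => ⟪u p.1, v p.2⟫) fun _ _ => trivial
  rw [card_univ, Fintype.card_fin] at hφ
  rw [card_univ_offDiag_cast, Fintype.card_fin] at hψ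
  have hS := sum_offDiag_inner_ge_of_norm_eq_one u v hu hv
  rw [Fintype.card_fin] at hS
  have harg : (((n : ℝ) - 2) / (2 * ((n : ℝ) - 1))) * ((1 / (n : ℝ)) * ∑ i, ⟪u i, v i⟫)
        - (n : ℝ) / (2 * ((n : ℝ) - 1))
      ≤ (1 / ((n : ℝ) * (n - 1))) * ∑ p ∈ univ.offDiag, ⟪u p.1, v p.2⟫ := by
    have hpos : (0 : ℝ) < n * (n - 1) := by nlinarith
    calc _ = (1 / ((n : ℝ) * (n - 1)))
          * ((n - 2) * (∑ i, ⟪u i, v i⟫) / 2 - (n : ℝ) ^ 2 / 2) := by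
          field_simp [(by linarith : (n : ℝ) - 1 ≠ 0)]
      _ ≤ _ := by gcongr
  linarith [hψm harg]

theorem stmt_12 {d n : ℕ} (hn : 2 ≤ n)
    (φ ψ : ℝ → ℝ) (hφc : ConcaveOn ℝ Set.univ φ) (hφm : Monotone φ)
    (hψc : ConvexOn ℝ Set.univ ψ) (hψm : Monotone ψ)
    (u v : Fin n → EuclideanSpace ℝ (Fin d))
    (hu : ∀ i, ‖u i‖ = 1) (hv : ∀ i, ‖v i‖ = 1) :
    -φ ((1 / (n : ℝ)) * ∑ i, ⟪u i, v i⟫)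
      + ψ ((((n : ℝ) - 2) / (2 * ((n : ℝ) - 1))) * ((1 / (n : ℝ)) * ∑ i, ⟪u i, v i⟫)
            - (n : ℝ) / (2 * ((n : ℝ) - 1)))
      ≤ -(1 / (n : ℝ)) * ∑ i, φ ⟪u i, v i⟫
        + (1 / ((n : ℝ) * (n - 1))) * ∑ p ∈ univ.offDiag, ψ ⟪u p.1, v p.2⟫ :=
  stmt_12_general hn φ ψ hφc hψc hψm u v hu hv
end

section
/- Let n ≥ 2, let φ : ℝ → ℝ be concave and monotone nondecreasing, let ψ : ℝ → ℝ be convex and monotone nondecreasing, and let u_1,…,u_n, v_1,…,v_n be vectors in ℝ^d with ‖u_i‖ = ‖v_i‖ = 1 for all i. Let p̄ := (1/n) ∑_{i=1}^n ⟨u_i, v_i⟩. Then −(1/n) ∑_{i=1}^n φ(⟨u_i, v_i⟩) + (1/(2n(n−1))) ∑_{i≠j} ( ψ(⟨u_i, u_j⟩) + ψ(⟨v_i, v_j⟩) ) ≥ −φ(p̄) + ψ(−2/(n−1)). -/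
open scoped RealInnerProductSpace
open Finset

lemma aux_offdiag_sum {d n : ℕ} (u : Fin n → EuclideanSpace ℝ (Fin d))
    (hu : ∀ i, ‖u i‖ = 1) :
    -(n : ℝ) ≤ ∑ p ∈ univ.offDiag, ⟪u p.1, u p.2⟫ := by
  have h1 : (0:ℝ) ≤ ⟪∑ i, u i, ∑ i, u i⟫ := real_inner_self_nonneg
  have h2 : ⟪∑ i, u i, ∑ i, u i⟫ = ∑ p ∈ (univ : Finset (Fin n)) ×ˢ univ, ⟪u p.1, u p.2⟫ := by
    rw [sum_inner, Finset.sum_product]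
    simp [inner_sum]
  have h3 : ∑ p ∈ (univ : Finset (Fin n)) ×ˢ univ, ⟪u p.1, u p.2⟫
      = ∑ i, ⟪u i, u i⟫ + ∑ p ∈ univ.offDiag, ⟪u p.1, u p.2⟫ := by
    rw [← Finset.diag_union_offDiag,
      Finset.sum_union (Finset.disjoint_diag_offDiag _), Finset.sum_diag]
  have h4 : ∑ i, ⟪u i, u i⟫ = (n : ℝ) := by
    have : ∀ i, ⟪u i, u i⟫ = (1:ℝ) := fun i => by
      rw [real_inner_self_eq_norm_sq, hu i]; norm_num
    simp [this, hu]
  rw [h2, h3, h4] at h1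
  linarith

theorem stmt_13 {d n : ℕ} (hn : 2 ≤ n)
    (φ ψ : ℝ → ℝ) (hφc : ConcaveOn ℝ Set.univ φ) (hφm : Monotone φ)
    (hψc : ConvexOn ℝ Set.univ ψ) (hψm : Monotone ψ)
    (u v : Fin n → EuclideanSpace ℝ (Fin d))
    (hu : ∀ i, ‖u i‖ = 1) (hv : ∀ i, ‖v i‖ = 1) :
    -φ ((1 / (n : ℝ)) * ∑ i, ⟪u i, v i⟫) + ψ (-2 / ((n : ℝ) - 1))
      ≤ -(1 / (n : ℝ)) * ∑ i, φ ⟪u i, v i⟫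
        + (1 / (2 * (n : ℝ) * (n - 1))) *
            ∑ p ∈ univ.offDiag, (ψ ⟪u p.1, u p.2⟫ + ψ ⟪v p.1, v p.2⟫) := by
  have hn1 : (1:ℝ) ≤ (n:ℝ) - 1 := by
    have : (2:ℝ) ≤ (n:ℝ) := by exact_mod_cast hn
    linarith
  have hnpos : (0:ℝ) < n := by
    have : (2:ℝ) ≤ (n:ℝ) := by exact_mod_cast hn
    linarith
  have hm : (0:ℝ) < (n:ℝ) * ((n:ℝ) - 1) := by positivity
  -- Jensen for φ (concave)
  have hφJ : (1 / (n : ℝ)) * ∑ i, φ ⟪u i, v i⟫ ≤ φ ((1 / (n : ℝ)) * ∑ i, ⟪u i, v i⟫) := by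
    have := hφc.le_map_sum (t := univ) (w := fun _ : Fin n => 1 / (n:ℝ))
      (p := fun i => ⟪u i, v i⟫)
      (fun i _ => by positivity)
      (by simp [Finset.sum_const]; field_simp)
      (fun i _ => Set.mem_univ _)
    simpa [smul_eq_mul, Finset.mul_sum] using this
  -- Jensen for ψ (convex) applied to a family over offDiag
  have card_od : ((univ : Finset (Fin n)).offDiag.card : ℝ) = (n:ℝ) * ((n:ℝ) - 1) := by
    rw [Finset.offDiag_card]
    simp only [Finset.card_univ, Fintype.card_fin]
    have h2 : n ≤ n * n := Nat.le_mul_of_pos_left n (by omega)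
    push_cast [Nat.cast_sub h2]
    ring
  have key : ∀ w : Fin n → EuclideanSpace ℝ (Fin d), (∀ i, ‖w i‖ = 1) →
      ψ (-2 / ((n:ℝ) - 1)) ≤ (1 / ((n:ℝ) * ((n:ℝ)-1))) * ∑ p ∈ univ.offDiag, ψ ⟪w p.1, w p.2⟫ := by
    intro w hw
    have hJ := hψc.map_sum_le (t := (univ : Finset (Fin n)).offDiag)
      (w := fun _ => 1 / ((n:ℝ) * ((n:ℝ)-1)))
      (p := fun p => ⟪w p.1, w p.2⟫)
      (fun p _ => by positivity)
      (by rw [Finset.sum_const, nsmul_eq_mul, card_od]; field_simp)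
      (fun p _ => Set.mem_univ _)
    have havg : -2 / ((n:ℝ) - 1) ≤ ∑ p ∈ univ.offDiag, (1 / ((n:ℝ) * ((n:ℝ)-1))) • ⟪w p.1, w p.2⟫ := by
      have hS := aux_offdiag_sum w hw
      rw [← Finset.smul_sum, smul_eq_mul]
      have h1 : (1 / ((n:ℝ) * ((n:ℝ)-1))) * (-(n:ℝ))
          ≤ (1 / ((n:ℝ) * ((n:ℝ)-1))) * ∑ p ∈ univ.offDiag, ⟪w p.1, w p.2⟫ :=
        mul_le_mul_of_nonneg_left hS (by positivity)
      have h2 : (1 / ((n:ℝ) * ((n:ℝ)-1))) * (-(n:ℝ)) = -1 / ((n:ℝ)-1) := by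
        field_simp
      have h3 : -2 / ((n:ℝ)-1) ≤ -1 / ((n:ℝ)-1) := by
        rw [div_le_div_iff₀ (by linarith) (by linarith)]; nlinarith
      linarith [h2 ▸ h1]
    calc ψ (-2 / ((n:ℝ) - 1)) ≤ ψ (∑ p ∈ univ.offDiag, (1 / ((n:ℝ) * ((n:ℝ)-1))) • ⟪w p.1, w p.2⟫) :=
          hψm havg
      _ ≤ ∑ p ∈ univ.offDiag, (1 / ((n:ℝ) * ((n:ℝ)-1))) * ψ ⟪w p.1, w p.2⟫ := hJ
      _ = (1 / ((n:ℝ) * ((n:ℝ)-1))) * ∑ p ∈ univ.offDiag, ψ ⟪w p.1, w p.2⟫ := by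
          rw [Finset.mul_sum]
  have ku := key u hu
  have kv := key v hv
  have hsplit : ∑ p ∈ (univ : Finset (Fin n)).offDiag, (ψ ⟪u p.1, u p.2⟫ + ψ ⟪v p.1, v p.2⟫)
      = ∑ p ∈ univ.offDiag, ψ ⟪u p.1, u p.2⟫ + ∑ p ∈ univ.offDiag, ψ ⟪v p.1, v p.2⟫ :=
    Finset.sum_add_distrib
  rw [hsplit]
  have hc : (1 / (2 * (n : ℝ) * ((n:ℝ) - 1))) = (1/2) * (1 / ((n:ℝ) * ((n:ℝ)-1))) := by
    field_simp
  rw [hc]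
  nlinarith [ku, kv]
end

section
/- Let b ≥ 1 and m ≥ 2, set n := b·m, and for each k ∈ {1,…,b} let w_{k,1},…,w_{k,m} be vectors in ℝ^d with ‖w_{k,i}‖ = 1 for all i and ⟨w_{k,i}, w_{k,j}⟩ = −1/(m−1) for all i ≠ j (each block forms an (m−1)-simplex equiangular tight frame). Define the second moment M₂ := (1/(n(n−1))) ∑_{(k,i) ≠ (l,j)} ⟨w_{k,i}, w_{l,j}⟩². Then M₂ ≥ 1/((m−1)(n−1)), and consequently the variance of the pairwise similarities satisfies M₂ − (1/(n−1))² ≥ (n−m)/((m−1)(n−1)²). -/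
open scoped RealInnerProductSpace
open Finset

lemma aux_eq1 (x n : ℝ) (hx : x ≠ 0) (hn : n ≠ 0) (hn1 : n - 1 ≠ 0) :
    1 / (x * (n - 1)) = (1 / (n * (n - 1))) * (n / x) := by
  field_simp

lemma aux_eq2 (x n : ℝ) (hx : x ≠ 0) (hn1 : n - 1 ≠ 0) :
    (n - (x + 1)) / (x * (n - 1) ^ 2) = 1 / (x * (n - 1)) - (1 / (n - 1)) ^ 2 := by
  field_simp
  ring

theorem stmt_17 {d b m : ℕ} (hb : 1 ≤ b) (hm : 2 ≤ m)
    (w : Fin b → Fin m → EuclideanSpace ℝ (Fin d))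
    (hw : ∀ k i, ‖w k i‖ = 1)
    (hetf : ∀ k, ∀ i j, i ≠ j → ⟪w k i, w k j⟫ = -1 / ((m : ℝ) - 1)) :
    1 / (((m : ℝ) - 1) * (((b * m : ℕ) : ℝ) - 1))
      ≤ (1 / (((b * m : ℕ) : ℝ) * (((b * m : ℕ) : ℝ) - 1))) *
          ∑ p ∈ (univ : Finset (Fin b × Fin m)).offDiag,
            ⟪w p.1.1 p.1.2, w p.2.1 p.2.2⟫ ^ 2
    ∧ (((b * m : ℕ) : ℝ) - (m : ℝ)) / (((m : ℝ) - 1) * (((b * m : ℕ) : ℝ) - 1) ^ 2)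
      ≤ (1 / (((b * m : ℕ) : ℝ) * (((b * m : ℕ) : ℝ) - 1))) *
          ∑ p ∈ (univ : Finset (Fin b × Fin m)).offDiag,
            ⟪w p.1.1 p.1.2, w p.2.1 p.2.2⟫ ^ 2
        - (1 / (((b * m : ℕ) : ℝ) - 1)) ^ 2 := by
  have hmR : (0:ℝ) < (m:ℝ) - 1 := by
    have : (2:ℝ) ≤ (m:ℝ) := by exact_mod_cast hm
    linarith
  have hn2 : 2 ≤ b * m := le_trans hm (Nat.le_mul_of_pos_left m hb)
  have hnR : (0:ℝ) < ((b*m : ℕ) : ℝ) - 1 := by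
    have : (2:ℝ) ≤ ((b*m : ℕ) : ℝ) := by exact_mod_cast hn2
    linarith
  have hnR0 : (0:ℝ) < ((b*m : ℕ) : ℝ) := by linarith
  set S := ((univ : Finset (Fin b × Fin m)).offDiag).filter (fun p => p.1.1 = p.2.1) with hS
  have hmemS : ∀ p ∈ S, p.1.1 = p.2.1 ∧ p.1.2 ≠ p.2.2 := by
    intro p hp
    rw [hS, mem_filter, mem_offDiag] at hp
    refine ⟨hp.2, fun h => hp.1.2.2 ?_⟩
    exact Prod.ext hp.2 h
  have hcard : S.card = b * (m * m - m) := by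
    have := Finset.card_bij'
      (s := S) (t := (univ : Finset (Fin b)) ×ˢ (univ : Finset (Fin m)).offDiag)
      (fun p _ => (p.1.1, p.1.2, p.2.2))
      (fun x _ => ((x.1, x.2.1), (x.1, x.2.2)))
      (by
        intro p hp
        obtain ⟨h1, h2⟩ := hmemS p hp
        simp [Finset.mem_offDiag, h2])
      (by
        intro x hx
        simp only [Finset.mem_product, Finset.mem_offDiag] at hx
        rw [hS, mem_filter, mem_offDiag]
        refine ⟨⟨mem_univ _, mem_univ _, ?_⟩, rfl⟩
        intro h
        exact hx.2.2.2 (congrArg Prod.snd h))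
      (by
        intro p hp
        obtain ⟨h1, _⟩ := hmemS p hp
        ext <;> simp [h1])
      (by intro x hx; rfl)
    rw [this, Finset.card_product, Finset.offDiag_card]
    simp [Nat.mul_sub]
  have hval : ∀ p ∈ S, ⟪w p.1.1 p.1.2, w p.2.1 p.2.2⟫ ^ 2 = (1 / ((m:ℝ) - 1))^2 := by
    intro p hp
    obtain ⟨h1, h2⟩ := hmemS p hp
    rw [← h1, hetf p.1.1 p.1.2 p.2.2 h2]
    ring
  have hsumS : ∑ p ∈ S, ⟪w p.1.1 p.1.2, w p.2.1 p.2.2⟫ ^ 2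
      = ((b*m : ℕ) : ℝ) * ((m:ℝ) - 1) * (1 / ((m:ℝ) - 1))^2 := by
    rw [Finset.sum_congr rfl hval, Finset.sum_const, hcard, nsmul_eq_mul]
    have hmm : m ≤ m * m := Nat.le_mul_of_pos_left m (by omega)
    push_cast [Nat.cast_sub hmm]
    ring
  have hge : ((b*m : ℕ) : ℝ) / ((m:ℝ) - 1)
      ≤ ∑ p ∈ (univ : Finset (Fin b × Fin m)).offDiag, ⟪w p.1.1 p.1.2, w p.2.1 p.2.2⟫ ^ 2 := by
    have hsub : S ⊆ (univ : Finset (Fin b × Fin m)).offDiag := Finset.filter_subset _ _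
    have := Finset.sum_le_sum_of_subset_of_nonneg hsub
      (fun p _ _ => sq_nonneg (⟪w p.1.1 p.1.2, w p.2.1 p.2.2⟫))
    rw [hsumS] at this
    calc ((b*m : ℕ) : ℝ) / ((m:ℝ) - 1)
        = ((b*m : ℕ) : ℝ) * ((m:ℝ) - 1) * (1 / ((m:ℝ) - 1))^2 := by
          field_simp
      _ ≤ _ := this
  have h1 : 1 / (((m : ℝ) - 1) * (((b * m : ℕ) : ℝ) - 1))
      ≤ (1 / (((b * m : ℕ) : ℝ) * (((b * m : ℕ) : ℝ) - 1))) *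
          ∑ p ∈ (univ : Finset (Fin b × Fin m)).offDiag,
            ⟪w p.1.1 p.1.2, w p.2.1 p.2.2⟫ ^ 2 := by
    have hpos : (0:ℝ) < ((b*m : ℕ) : ℝ) * (((b * m : ℕ) : ℝ) - 1) := by positivity
    calc 1 / (((m : ℝ) - 1) * (((b * m : ℕ) : ℝ) - 1))
        = (1 / (((b * m : ℕ) : ℝ) * (((b * m : ℕ) : ℝ) - 1))) * (((b*m : ℕ) : ℝ) / ((m:ℝ) - 1)) :=
          aux_eq1 _ _ (ne_of_gt hmR) (ne_of_gt hnR0) (ne_of_gt hnR)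
      _ ≤ _ := by
          apply mul_le_mul_of_nonneg_left hge
          positivity
  refine ⟨h1, ?_⟩
  have heq : (((b * m : ℕ) : ℝ) - (m : ℝ)) / (((m : ℝ) - 1) * (((b * m : ℕ) : ℝ) - 1) ^ 2)
      = 1 / (((m : ℝ) - 1) * (((b * m : ℕ) : ℝ) - 1)) - (1 / (((b * m : ℕ) : ℝ) - 1)) ^ 2 := by
    have := aux_eq2 ((m:ℝ) - 1) (((b*m : ℕ) : ℝ)) (ne_of_gt hmR) (ne_of_gt hnR)
    rw [sub_add_cancel] at this
    exact this
  linarith [h1]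
end

section
/- Let b ≥ 1 and m ≥ 2, set n := b·m, and for each k ∈ {1,…,b} let w_{k,1},…,w_{k,m} be vectors in ℝ^d with ‖w_{k,i}‖ = 1 for all i and ⟨w_{k,i}, w_{k,j}⟩ = −1/(m−1) for all i ≠ j (each block forms an (m−1)-simplex equiangular tight frame). Define the second moment M₂ := (1/(n(n−1))) ∑_{(k,i) ≠ (l,j)} ⟨w_{k,i}, w_{l,j}⟩². Then M₂ ≤ (n−m+1)/((m−1)(n−1)), and consequently the variance of the pairwise similarities satisfies M₂ − (1/(n−1))² ≤ n(n−m)/((m−1)(n−1)²). -/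
open scoped RealInnerProductSpace
open Finset

/-!
For a simplex ETF `v₁, …, v_m` and any `x`, put `y = ∑ ⟪x, vᵢ⟫ vᵢ`. The Gram matrix
`(m δᵢⱼ - 1)/(m - 1)` of the frame gives `(m - 1)‖y‖² ≤ m ∑ ⟪x, vᵢ⟫²`, and Cauchy–Schwarz applied
to `⟪x, y⟫ = ∑ ⟪x, vᵢ⟫²` turns this into the frame bound `∑ ⟪x, vᵢ⟫² ≤ m/(m - 1) ‖x‖²`.
Summing it over the `b` blocks and over all `n` unit vectors `x = w_{k,i}` bounds the full sum of
squared inner products by `n · bm/(m - 1)`; the `n` diagonal terms equal `1`, which leaves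
`n(n - m + 1)/(m - 1)` for the off-diagonal ones.
-/

theorem Finset.sum_univ_offDiag {κ M : Type*} [Fintype κ] [DecidableEq κ] [AddCommGroup M]
    (f : κ × κ → M) : ∑ p ∈ univ.offDiag, f p = ∑ p, f p - ∑ i, f (i, i) := by
  rw [← sum_diag univ, eq_sub_iff_add_eq, ← sum_union (disjoint_diag_offDiag _).symm,
    union_comm, diag_union_offDiag, univ_product_univ]

section

variable {E ι : Type*} [NormedAddCommGroup E] [InnerProductSpace ℝ E] [Fintype ι]

def IsSimplexETF (v : ι → E) : Prop :=
  (∀ i, ‖v i‖ = 1) ∧ ∀ i j, i ≠ j → ⟪v i, v j⟫ = -1 / ((Fintype.card ι : ℝ) - 1)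

namespace IsSimplexETF

variable {v : ι → E}

theorem sub_one_mul_inner [DecidableEq ι] (hv : IsSimplexETF v) (i j : ι) :
    ((Fintype.card ι : ℝ) - 1) * ⟪v i, v j⟫ = (if i = j then (Fintype.card ι : ℝ) else 0) - 1 := by
  by_cases hij : i = j
  · subst hij
    rw [real_inner_self_eq_norm_sq, hv.1 i, if_pos rfl]
    ring
  · have hcard : (1 : ℝ) < Fintype.card ι := by
      exact_mod_cast Fintype.one_lt_card_iff.2 ⟨i, j, hij⟩
    rw [hv.2 i j hij, if_neg hij]
    field_simp [(sub_pos.2 hcard).ne']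
    ring

theorem sub_one_mul_norm_sum_smul_sq (hv : IsSimplexETF v) (c : ι → ℝ) :
    ((Fintype.card ι : ℝ) - 1) * ‖∑ i, c i • v i‖ ^ 2
      = Fintype.card ι * ∑ i, c i ^ 2 - (∑ i, c i) ^ 2 := by
  classical
  rw [← real_inner_self_eq_norm_sq, sum_inner, mul_sum]
  simp_rw [inner_sum, real_inner_smul_left, real_inner_smul_right, mul_sum]
  calc ∑ i, ∑ j, ((Fintype.card ι : ℝ) - 1) * (c i * (c j * ⟪v i, v j⟫))
      = ∑ i, ∑ j, c i * c j * ((if i = j then (Fintype.card ι : ℝ) else 0) - 1) := by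
        simp_rw [← hv.sub_one_mul_inner]; ring_nf
    _ = _ := by
        simp_rw [mul_sub, mul_ite, mul_zero, sum_sub_distrib, sum_ite_eq, mem_univ, if_true,
          mul_one, ← sum_mul_sum, sq, mul_sum, mul_comm (Fintype.card ι : ℝ)]

theorem sub_one_mul_sum_inner_sq_le (hv : IsSimplexETF v) (x : E) :
    ((Fintype.card ι : ℝ) - 1) * ∑ i, ⟪x, v i⟫ ^ 2 ≤ Fintype.card ι * ‖x‖ ^ 2 := by
  set m : ℝ := (Fintype.card ι : ℝ)
  set S := ∑ i, ⟪x, v i⟫ ^ 2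
  set y := ∑ i, ⟪x, v i⟫ • v i
  have hS : 0 ≤ S := sum_nonneg fun i _ => sq_nonneg _
  rcases lt_or_ge (m - 1) 0 with hm | hm
  · have hm0 : 0 ≤ m := Nat.cast_nonneg _
    nlinarith [mul_nonneg hm0 (sq_nonneg ‖x‖)]
  have hxy : ⟪x, y⟫ = S := by
    simp only [y, S, inner_sum, real_inner_smul_right, sq]
  have hy : (m - 1) * ‖y‖ ^ 2 ≤ m * S := by
    rw [hv.sub_one_mul_norm_sum_smul_sq]
    nlinarith [sq_nonneg (∑ i, ⟪x, v i⟫)]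
  have hCS : S ^ 2 ≤ ‖x‖ ^ 2 * ‖y‖ ^ 2 := by
    rw [← mul_pow, ← hxy]
    exact pow_le_pow_left₀ (hxy ▸ hS) (real_inner_le_norm x y) 2
  have key : (m - 1) * S * S ≤ m * ‖x‖ ^ 2 * S := by
    calc (m - 1) * S * S = (m - 1) * S ^ 2 := by ring
      _ ≤ ‖x‖ ^ 2 * ((m - 1) * ‖y‖ ^ 2) := by nlinarith
      _ ≤ ‖x‖ ^ 2 * (m * S) := by gcongr
      _ = m * ‖x‖ ^ 2 * S := by ring
  rcases hS.eq_or_lt with h0 | hpos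
  · rw [← h0, mul_zero]
    positivity
  · exact le_of_mul_le_mul_right key hpos

end IsSimplexETF

theorem sub_one_mul_sum_sum_inner_sq_le {κ : Type*} [Fintype κ] {w : κ → ι → E}
    (hw : ∀ k, IsSimplexETF (w k)) (x : E) :
    ((Fintype.card ι : ℝ) - 1) * ∑ k, ∑ i, ⟪x, w k i⟫ ^ 2
      ≤ Fintype.card κ * Fintype.card ι * ‖x‖ ^ 2 := by
  rw [mul_sum]
  calc ∑ k, ((Fintype.card ι : ℝ) - 1) * ∑ i, ⟪x, w k i⟫ ^ 2
      ≤ ∑ _k : κ, (Fintype.card ι : ℝ) * ‖x‖ ^ 2 :=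
        sum_le_sum fun k _ => (hw k).sub_one_mul_sum_inner_sq_le x
    _ = _ := by rw [sum_const, card_univ, nsmul_eq_mul, mul_assoc]

end

theorem stmt_18 {d b m : ℕ} (hb : 1 ≤ b) (hm : 2 ≤ m)
    (w : Fin b → Fin m → EuclideanSpace ℝ (Fin d))
    (hw : ∀ k i, ‖w k i‖ = 1)
    (hetf : ∀ k, ∀ i j, i ≠ j → ⟪w k i, w k j⟫ = -1 / ((m : ℝ) - 1)) :
    (1 / (((b * m : ℕ) : ℝ) * (((b * m : ℕ) : ℝ) - 1))) *
        ∑ p ∈ (univ : Finset (Fin b × Fin m)).offDiag,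
          ⟪w p.1.1 p.1.2, w p.2.1 p.2.2⟫ ^ 2
      ≤ (((b * m : ℕ) : ℝ) - (m : ℝ) + 1) / (((m : ℝ) - 1) * (((b * m : ℕ) : ℝ) - 1))
    ∧ (1 / (((b * m : ℕ) : ℝ) * (((b * m : ℕ) : ℝ) - 1))) *
        ∑ p ∈ (univ : Finset (Fin b × Fin m)).offDiag,
          ⟪w p.1.1 p.1.2, w p.2.1 p.2.2⟫ ^ 2
        - (1 / (((b * m : ℕ) : ℝ) - 1)) ^ 2
      ≤ ((b * m : ℕ) : ℝ) * (((b * m : ℕ) : ℝ) - (m : ℝ)) /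
          (((m : ℝ) - 1) * (((b * m : ℕ) : ℝ) - 1) ^ 2) := by
  have hETF : ∀ k, IsSimplexETF (w k) := fun k => ⟨hw k, by simpa using hetf k⟩
  set n : ℝ := ((b * m : ℕ) : ℝ) with hn
  set S := ∑ p ∈ (univ : Finset (Fin b × Fin m)).offDiag, ⟪w p.1.1 p.1.2, w p.2.1 p.2.2⟫ ^ 2
  have hm1 : (0 : ℝ) < m - 1 := by
    have : (2 : ℝ) ≤ m := by exact_mod_cast hm
    linarith
  have hn1 : (0 : ℝ) < n - 1 := by
    have : (2 : ℝ) ≤ n := by rw [hn]; exact_mod_cast le_mul_of_one_le_of_le hb hm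
    linarith
  have hdiag : ∑ p : Fin b × Fin m, ⟪w p.1 p.2, w p.1 p.2⟫ ^ 2 = n := by
    simp [hw, hn]
  have hfull : (m - 1) * ∑ q : (Fin b × Fin m) × (Fin b × Fin m),
      ⟪w q.1.1 q.1.2, w q.2.1 q.2.2⟫ ^ 2 ≤ n * n := by
    rw [Fintype.sum_prod_type, mul_sum]
    calc _ ≤ ∑ _p : Fin b × Fin m, n := sum_le_sum fun p _ => by
          simpa [Fintype.sum_prod_type, hw, hn] using
            sub_one_mul_sum_sum_inner_sq_le hETF (w p.1 p.2)
      _ = n * n := by simp [hn]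
  have hS : (m - 1) * S ≤ n * (n - m + 1) := by
    rw [show S = _ from sum_univ_offDiag _, hdiag, mul_sub]
    linarith
  have hmoment : 1 / (n * (n - 1)) * S ≤ (n - m + 1) / ((m - 1) * (n - 1)) := by
    rw [div_mul_eq_mul_div, one_mul, div_le_div_iff₀ (by positivity) (by positivity)]
    nlinarith
  refine ⟨hmoment, ?_⟩
  have hvar : (n - m + 1) / ((m - 1) * (n - 1)) - (1 / (n - 1)) ^ 2
      = n * (n - m) / ((m - 1) * (n - 1) ^ 2) := by
    field_simp
    ring
  linarith
end
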